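/- Let H(z) = (√2/32)·[16, −z^{−2} + 9z^{−1} + 9 − z]. Then 1 − H(z)H(z)* ≥ 0 for all z ∈ T (sub-QMF condition), where 1 − H(z)H(z)* is real for z ∈ T. -/

import Mathlib

open Complex

/-- The polyphase row vector of the Deslauriers–Dubuc order-4 lowpass filter. -/
noncomputable def H14 (z : ℂ) : Fin 2 → ℂ :=
  ![(Real.sqrt 2 / 32 : ℝ) * 16,
    (Real.sqrt 2 / 32 : ℝ) * (-z⁻¹ ^ 2 + 9 * z⁻¹ + 9 - z)]

/-!
Writing `w = z + z⁻¹`, a direct expansion gives `1 - H(z)H(z)* = (2 - w)² (14 - w) / 512`.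
On the unit circle `w = 2 Re z` is real and at most `2`, so both factors are nonnegative.
-/

lemma Complex.add_inv_eq_two_mul_re {z : ℂ} (hz : ‖z‖ = 1) : z + z⁻¹ = ((2 * z.re : ℝ) : ℂ) := by
  rw [inv_eq_conj hz, add_conj]

lemma Complex.re_le_one_of_norm_eq_one {z : ℂ} (hz : ‖z‖ = 1) : z.re ≤ 1 :=
  hz ▸ re_le_norm z

lemma one_sub_H14_mul_H14_inv {z : ℂ} (hz : z ≠ 0) :
    1 - ∑ j : Fin 2, H14 z j * H14 z⁻¹ j = (2 - (z + z⁻¹)) ^ 2 * (14 - (z + z⁻¹)) / 512 := by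
  have hsqrt : ((Real.sqrt 2 : ℝ) : ℂ) ^ 2 = 2 := by
    norm_cast; exact Real.sq_sqrt zero_le_two
  simp only [H14, Fin.sum_univ_two, Matrix.cons_val_zero, Matrix.cons_val_one, inv_inv]
  push_cast
  field_simp
  rw [hsqrt]
  ring

/-- The sub-QMF condition of Example 3: `1 - H(z)H(z)*` is real and nonnegative on `T`,
where `H(z)* = H(z⁻¹)ᵀ`. -/
theorem stmt14 :
    ∀ z : ℂ, ‖z‖ = 1 →
      (1 - ∑ j : Fin 2, H14 z j * H14 z⁻¹ j).im = 0 ∧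
      0 ≤ (1 - ∑ j : Fin 2, H14 z j * H14 z⁻¹ j).re := by
  intro z hz
  have hz0 : z ≠ 0 := norm_ne_zero_iff.mp (hz ▸ one_ne_zero)
  have hre := re_le_one_of_norm_eq_one hz
  rw [one_sub_H14_mul_H14_inv hz0, add_inv_eq_two_mul_re hz]
  norm_cast
  refine ⟨rfl, ?_⟩
  have h14 : (0 : ℝ) ≤ 14 - 2 * z.re := by linarith
  positivity
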